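/- Let $u,\bar u:\mathbb{N}\to\mathbb{R}$ be sequences satisfying the consistency relation $u_n-(n+1)\,u_{n+1}=-\bar u_n-(n+1)\,\bar u_{n+1}$ for every $n\ge 0$. Define $v:\mathbb{N}\to\mathbb{R}$ recursively by $v_0=\tfrac12(u_0-\bar u_0)$ and $v_{n+1}=\tfrac{1}{n+1}(u_n-v_n)$. Then for every $n\ge 0$ one has $u_n=v_n+(n+1)\,v_{n+1}$ and $\bar u_n=-v_n+(n+1)\,v_{n+1}$; in particular $\bar u_0=v_1-v_0$. -/
import Mathlib


/-- Combinatorial core of Theorem 6.1: the consistency relation between the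
Zimmermann coefficient towers `u`, `ū` can be inverted through the auxiliary
sequence `v` defined by the given recursion. -/
theorem zimmermann_consistency_inversion
    (u ubar v : ℕ → ℝ)
    (hcons : ∀ n : ℕ, u n - ((n : ℝ) + 1) * u (n + 1)
      = -(ubar n) - ((n : ℝ) + 1) * ubar (n + 1))
    (hv0 : v 0 = (1 / 2) * (u 0 - ubar 0))
    (hvrec : ∀ n : ℕ, v (n + 1) = (1 / ((n : ℝ) + 1)) * (u n - v n)) :
    (∀ n : ℕ, u n = v n + ((n : ℝ) + 1) * v (n + 1)
      ∧ ubar n = -(v n) + ((n : ℝ) + 1) * v (n + 1))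
    ∧ ubar 0 = v 1 - v 0 := by
  have hne : ∀ n : ℕ, ((n : ℝ) + 1) ≠ 0 := fun n => by positivity
  have hu : ∀ n : ℕ, ((n : ℝ) + 1) * v (n + 1) = u n - v n := by
    intro n
    rw [hvrec n]
    field_simp
  have hbar : ∀ n : ℕ, ubar n = u n - 2 * v n := by
    intro n
    induction n with
    | zero => rw [hv0]; ring
    | succ k ih =>
      have hc := hcons k
      rw [ih] at hc
      have hk := hu k
      have h2 : ((k : ℝ) + 1) * ubar (k + 1) = ((k : ℝ) + 1) * (u (k + 1) - 2 * v (k + 1)) := by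
        have : ((k : ℝ) + 1) * (2 * v (k + 1)) = 2 * (u k - v k) := by
          rw [← hk]; ring
        nlinarith [this]
      have := mul_left_cancel₀ (hne k) h2
      linarith
  refine ⟨fun n => ⟨by linarith [hu n], by linarith [hu n, hbar n]⟩, ?_⟩
  have h0 := hbar 0
  have h1 := hu 0
  push_cast at h1
  linarith
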